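/- arXiv:1712.01960 — 4 statements merged into one kernel-verified Lean document; each statement's English description precedes it below -/
import Mathlib

section
/- For every diversity (X, δ) with |X| = n, the map φ : X → ℝ^n defined by φ(x) = (d(x,x_1), …, d(x,x_n)), where d is the induced metric and X = {x_1,…,x_n}, satisfies δ(A) ≤ δ̂(φ(A)) ≤ n·δ(A) for all finite A ⊆ X with |A| ≥ 1, where δ̂ is the ℓ1 diversity on ℝ^n. Hence φ is an embedding with distortion at most n. -/
open scoped Classical

/-- The ℓ₁ diversity on ℝ^n: δ̂(A) = ∑_i max_{a,b ∈ A} |a_i - b_i|. -/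
noncomputable def l1Div {n : ℕ} (A : Finset (Fin n → ℝ)) : ℝ :=
  ∑ i : Fin n,
    if h : A.Nonempty then (A ×ˢ A).sup' (h.product h) (fun p => |p.1 i - p.2 i|) else 0

/-- For every diversity (X, δ) with |X| = n, the map
φ(x) = (d(x,x₁), …, d(x,xₙ)), where d(x,y) = δ({x,y}) is the induced metric and
X = {x₁,…,xₙ}, satisfies δ(A) ≤ δ̂(φ(A)) ≤ n·δ(A) for every nonempty finite A,
where δ̂ is the ℓ₁ diversity on ℝ^n; hence φ has distortion at most n. -/
theorem embedding_distortion_n {X : Type*} [Fintype X] [DecidableEq X]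
    (n : ℕ) (hn : n = Fintype.card X)
    (δ : Finset X → ℝ)
    (h_nonneg : ∀ A : Finset X, 0 ≤ δ A)
    (h_zero : ∀ A : Finset X, δ A = 0 ↔ A.card ≤ 1)
    (h_tri : ∀ A B C : Finset X, C.Nonempty → δ (A ∪ B) ≤ δ (A ∪ C) + δ (C ∪ B))
    (e : X ≃ Fin n)
    (φ : X → (Fin n → ℝ)) (hφ : ∀ (x : X) (i : Fin n), φ x i = δ {x, e.symm i}) :
    ∀ A : Finset X, A.Nonempty →
      δ A ≤ l1Div (A.image φ) ∧ l1Div (A.image φ) ≤ (n : ℝ) * δ A := by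
  -- basic consequences of the axioms
  have hδsingle : ∀ x : X, δ {x} = 0 := fun x => (h_zero _).mpr (by simp)
  have hδpairself : ∀ x : X, δ {x, x} = 0 := fun x => by
    simpa using hδsingle x
  have hins : ∀ (S : Finset X) (x : X), δ S ≤ δ (insert x S) := by
    intro S x
    have h := h_tri S ∅ {x} (by simp)
    have e1 : S ∪ ∅ = S := Finset.union_empty S
    have e2 : S ∪ {x} = insert x S := by ext y; simp [or_comm]
    have e3 : ({x} : Finset X) ∪ ∅ = {x} := Finset.union_empty _
    rw [e1, e2, e3, hδsingle] at h
    linarith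
  have hmono : ∀ {S T : Finset X}, S ⊆ T → δ S ≤ δ T := by
    intro S T hST
    have key : ∀ C : Finset X, δ S ≤ δ (S ∪ C) := by
      intro C
      induction C using Finset.induction with
      | empty => simp
      | @insert a C ha ih =>
        refine le_trans ih ?_
        have := hins (S ∪ C) a
        simpa [Finset.union_insert] using this
    have := key T
    rwa [Finset.union_eq_right.mpr hST] at this
  have htri2 : ∀ a b c : X, δ {a, c} ≤ δ {a, b} + δ {b, c} := by
    intro a b c
    have h := h_tri {a} {c} {b} (by simp)
    have e1 : ({a} : Finset X) ∪ {c} = {a, c} := by ext y; simp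
    have e2 : ({a} : Finset X) ∪ {b} = {a, b} := by ext y; simp
    have e3 : ({b} : Finset X) ∪ {c} = {b, c} := by ext y; simp
    rwa [e1, e2, e3] at h
  have hchain : ∀ (a₀ : X) (S : Finset X), δ (insert a₀ S) ≤ ∑ a ∈ S, δ {a₀, a} := by
    intro a₀ S
    induction S using Finset.induction with
    | empty => simp [hδsingle]
    | @insert x S' hx ih =>
      rw [Finset.sum_insert hx]
      have h := h_tri (insert a₀ S') {x} {a₀} (by simp)
      have e1 : insert a₀ S' ∪ {x} = insert a₀ (insert x S') := by
        ext y; simp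
      have e2 : insert a₀ S' ∪ {a₀} = insert a₀ S' := by ext y; simp
      have e3 : ({a₀} : Finset X) ∪ {x} = {a₀, x} := by ext y; simp
      rw [e1, e2, e3] at h
      linarith
  intro A hA
  obtain ⟨a₀, ha₀⟩ := hA
  have hA : A.Nonempty := ⟨a₀, ha₀⟩
  have himg : (A.image φ).Nonempty := hA.image φ
  set T : Fin n → ℝ := fun i =>
    ((A.image φ) ×ˢ (A.image φ)).sup' (himg.product himg) (fun p => |p.1 i - p.2 i|) with hT
  have hl1 : l1Div (A.image φ) = ∑ i : Fin n, T i := by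
    unfold l1Div
    exact Finset.sum_congr rfl fun i _ => dif_pos himg
  -- each coordinate's sup is nonnegative and, over pairs from A, bounded by δ A
  have hTnonneg : ∀ i : Fin n, 0 ≤ T i := by
    intro i
    have hmem : (φ a₀, φ a₀) ∈ (A.image φ) ×ˢ (A.image φ) :=
      Finset.mem_product.mpr ⟨Finset.mem_image_of_mem φ ha₀, Finset.mem_image_of_mem φ ha₀⟩
    have hle := Finset.le_sup' (fun p : (Fin n → ℝ) × (Fin n → ℝ) => |p.1 i - p.2 i|) hmem
    have h0 : (0:ℝ) = |φ a₀ i - φ a₀ i| := by simp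
    rw [hT]; rw [h0]; exact hle
  have hTle : ∀ i : Fin n, T i ≤ δ A := by
    intro i
    apply Finset.sup'_le
    intro p hp
    obtain ⟨hp1, hp2⟩ := Finset.mem_product.mp hp
    obtain ⟨a, haA, hpa⟩ := Finset.mem_image.mp hp1
    obtain ⟨b, hbA, hpb⟩ := Finset.mem_image.mp hp2
    have hpair : ({a, b} : Finset X) ⊆ A := by
      intro y hy
      rcases Finset.mem_insert.mp hy with h | h
      · exact h ▸ haA
      · exact (Finset.mem_singleton.mp h) ▸ hbA
    have hab : δ {a, b} ≤ δ A := hmono hpair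
    have hba : δ ({b, a} : Finset X) = δ {a, b} := by rw [Finset.pair_comm]
    have h1 : δ {a, e.symm i} ≤ δ {a, b} + δ {b, e.symm i} := htri2 a b (e.symm i)
    have h2 : δ {b, e.symm i} ≤ δ {b, a} + δ {a, e.symm i} := htri2 b a (e.symm i)
    have habs : |φ a i - φ b i| ≤ δ {a, b} := by
      rw [hφ a i, hφ b i, abs_sub_le_iff]
      constructor <;> linarith [hba ▸ h2, h1]
    calc |p.1 i - p.2 i| = |φ a i - φ b i| := by rw [hpa, hpb]
      _ ≤ δ {a, b} := habs
      _ ≤ δ A := hab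
  constructor
  · -- lower bound
    have hstep1 : δ A ≤ ∑ a ∈ A, δ {a₀, a} := by
      have := hchain a₀ A
      rwa [Finset.insert_eq_self.mpr ha₀] at this
    have hstep2 : ∑ a ∈ A, δ {a₀, a} = ∑ i ∈ A.image e, δ {a₀, e.symm i} := by
      rw [Finset.sum_image (fun x _ y _ h => e.injective h)]
      exact Finset.sum_congr rfl fun a _ => by rw [Equiv.symm_apply_apply]
    have hstep3 : ∀ i ∈ A.image e, δ {a₀, e.symm i} ≤ T i := by
      intro i hi
      obtain ⟨a, haA, rfl⟩ := Finset.mem_image.mp hi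
      have hmem : (φ a₀, φ a) ∈ (A.image φ) ×ˢ (A.image φ) :=
        Finset.mem_product.mpr ⟨Finset.mem_image_of_mem φ ha₀, Finset.mem_image_of_mem φ haA⟩
      have hle := Finset.le_sup' (fun p : (Fin n → ℝ) × (Fin n → ℝ) => |p.1 (e a) - p.2 (e a)|) hmem
      have hval : |φ a₀ (e a) - φ a (e a)| = δ {a₀, e.symm (e a)} := by
        rw [hφ, hφ, Equiv.symm_apply_apply, hδpairself, sub_zero,
          abs_of_nonneg (h_nonneg _)]
      rw [← hval]
      exact hle
    have hstep4 : ∑ i ∈ A.image e, δ {a₀, e.symm i} ≤ ∑ i ∈ A.image e, T i :=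
      Finset.sum_le_sum hstep3
    have hstep5 : ∑ i ∈ A.image e, T i ≤ ∑ i : Fin n, T i :=
      Finset.sum_le_sum_of_subset_of_nonneg (Finset.subset_univ _)
        (fun i _ _ => hTnonneg i)
    rw [hl1]
    linarith
  · -- upper bound
    rw [hl1]
    calc ∑ i : Fin n, T i ≤ ∑ _i : Fin n, δ A := Finset.sum_le_sum fun i _ => hTle i
      _ = (n : ℝ) * δ A := by simp [mul_comm]
end

section
/- The Steiner diversity is the maximal diversity with induced metric d: if (X, δ) is a finite diversity with induced metric d and δ_S is the Steiner diversity of (X,d), then δ(A) ≤ δ_S(A) for all finite A ⊆ X. -/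
open scoped Classical

/-- The Steiner diversity of a metric d on X. -/
noncomputable def steinerDiv {X : Type*} (d : X → X → ℝ) (A : Finset X) : ℝ :=
  sInf { c : ℝ | ∃ E : Finset (X × X),
    (∀ a ∈ A, ∀ b ∈ A,
      Relation.ReflTransGen (fun u v => (u, v) ∈ E ∨ (v, u) ∈ E) a b) ∧
    c = ∑ e ∈ E, d e.1 e.2 }

/-!
A set `A` linked by an edge set `E` satisfies `δ A ≤ ∑_{uv ∈ E} δ {u, v}`, by strong induction
on `E`. Delete an edge `e = uv`. If `A` stays linked, nonnegativity of `δ` finishes. Otherwise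
`e` is a bridge: every point of `A` is still linked to `u` or to `v`, the two sides are spanned by
disjoint sets of edges, and the triangle inequality through `u` and then `v` gives
`δ A ≤ δ (A_u ∪ {u}) + δ {u, v} + δ ({v} ∪ A_v)`.
-/

open Relation Finset

section Linked

variable {X : Type*}

abbrev Linked (E : Finset (X × X)) : X → X → Prop :=
  ReflTransGen (SymmGen fun u v => (u, v) ∈ E)

def Connects (E : Finset (X × X)) (A : Finset X) : Prop :=
  ∀ a ∈ A, ∀ b ∈ A, Linked E a b

theorem Linked.mono {E F : Finset (X × X)} (h : E ⊆ F) {a b : X} (hab : Linked E a b) :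
    Linked F a b :=
  ReflTransGen.mono (fun _ _ => Or.imp (@h _) (@h _)) _ _ hab

theorem Linked.eq_of_empty {a b : X} (h : Linked (∅ : Finset (X × X)) a b) : a = b := by
  rcases h.cases_tail with h | ⟨_, _, hc | hc⟩
  · exact h.symm
  all_goals simp at hc

theorem Linked.erase_or [DecidableEq X] {E : Finset (X × X)} (e : X × X) {a b : X}
    (h : Linked E a b) :
    Linked (E.erase e) a b ∨ Linked (E.erase e) a e.1 ∨ Linked (E.erase e) a e.2 := by
  induction h with
  | refl => exact .inl .refl
  | @tail c d _ hcd ih =>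
    rcases ih with hac | hae
    · by_cases hd : (c, d) = e ∨ (d, c) = e
      · rcases hd with rfl | rfl
        exacts [.inr (.inl hac), .inr (.inr hac)]
      · rw [not_or] at hd
        exact .inl (hac.tail (Or.imp (fun h => mem_erase.2 ⟨hd.1, h⟩)
          (fun h => mem_erase.2 ⟨hd.2, h⟩) hcd))
    · exact .inr hae

theorem Linked.filter {E : Finset (X × X)} {x t : X} (h : Linked E x t) :
    Linked (E.filter fun f => Linked E f.1 t) x t := by
  induction h using ReflTransGen.head_induction_on with
  | refl => exact .refl
  | @head x c hxc hct ih =>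
    have hxt : Linked E x t := .head hxc hct
    exact .head (Or.imp (fun h => mem_filter.2 ⟨h, hxt⟩) (fun h => mem_filter.2 ⟨h, hct⟩) hxc) ih

theorem Connects.mono {E F : Finset (X × X)} (h : E ⊆ F) {A : Finset X} (hA : Connects E A) :
    Connects F A :=
  fun a ha b hb => (hA a ha b hb).mono h

theorem connects_of_forall_linked {E : Finset (X × X)} {A : Finset X} {t : X}
    (h : ∀ a ∈ A, Linked E a t) : Connects E A :=
  fun a ha b hb => (h a ha).trans (symm (h b hb))

theorem connects_component [DecidableEq X] (E : Finset (X × X)) (A : Finset X) (t : X) :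
    Connects (E.filter fun f => Linked E f.1 t) (insert t (A.filter (Linked E · t))) := by
  refine connects_of_forall_linked (t := t) fun a ha => ?_
  rcases mem_insert.1 ha with rfl | ha
  · exact .refl
  · exact (mem_filter.1 ha).2.filter

theorem connects_component_of_not_linked [DecidableEq X] {E : Finset (X × X)} {u v : X}
    (huv : ¬ Linked E u v) (A : Finset X) :
    Connects (E.filter fun f => ¬ Linked E f.1 u) (insert v (A.filter (Linked E · v))) :=
  (connects_component E A v).mono <| monotone_filter_right E (q := fun f => ¬ Linked E f.1 u)
    fun f _ (hfv : Linked E f.1 v) (hfu : Linked E f.1 u) => huv ((symm hfu).trans hfv)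

theorem Connects.card_le_one_of_empty {A : Finset X} (hA : Connects (∅ : Finset (X × X)) A) :
    A.card ≤ 1 :=
  card_le_one.2 fun a ha b hb => (hA a ha b hb).eq_of_empty

theorem Connects.erase_or [DecidableEq X] {E : Finset (X × X)} {A : Finset X}
    (hA : Connects E A) (e : X × X) :
    Connects (E.erase e) A ∨
      (¬ Linked (E.erase e) e.1 e.2 ∧
        ∀ a ∈ A, Linked (E.erase e) a e.1 ∨ Linked (E.erase e) a e.2) := by
  by_cases hside : ∀ a ∈ A, Linked (E.erase e) a e.1 ∨ Linked (E.erase e) a e.2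
  · by_cases huv : Linked (E.erase e) e.1 e.2
    · exact .inl (connects_of_forall_linked fun a ha =>
        (hside a ha).elim id (·.trans (symm huv)))
    · exact .inr ⟨huv, hside⟩
  · push Not at hside
    obtain ⟨a, ha, hau, hav⟩ := hside
    refine .inl (connects_of_forall_linked (t := a) fun b hb => symm ?_)
    rcases (hA a ha b hb).erase_or e with h | h | h
    exacts [h, absurd h hau, absurd h hav]

end Linked

section Semidiversity

variable {X : Type*} [DecidableEq X]

structure IsSemidiversity (δ : Finset X → ℝ) : Prop where
  eq_zero_of_card_le_one : ∀ A : Finset X, A.card ≤ 1 → δ A = 0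
  triangle : ∀ A B C : Finset X, C.Nonempty → δ (A ∪ B) ≤ δ (A ∪ C) + δ (C ∪ B)

namespace IsSemidiversity

variable {δ : Finset X → ℝ}

theorem nonneg (hδ : IsSemidiversity δ) (A : Finset X) : 0 ≤ δ A := by
  rcases A.eq_empty_or_nonempty with rfl | hA
  · exact (hδ.eq_zero_of_card_le_one ∅ (by simp)).ge
  · simpa using hδ.triangle A A A hA

theorem le_insert (hδ : IsSemidiversity δ) (A : Finset X) (x : X) : δ A ≤ δ (insert x A) := by
  simpa [hδ.eq_zero_of_card_le_one {x} (by simp)] using hδ.triangle A ∅ {x} (by simp)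

theorem mono (hδ : IsSemidiversity δ) : Monotone δ := by
  intro A B hAB
  suffices ∀ C, δ A ≤ δ (A ∪ C) by simpa [union_eq_right.2 hAB] using this B
  intro C
  induction C using Finset.induction_on with
  | empty => simp
  | insert x C _ ih => rw [union_insert]; exact ih.trans (hδ.le_insert _ x)

theorem le_add_pair_add (hδ : IsSemidiversity δ) {P Q : Finset X} {u v : X} (hu : u ∈ P)
    (hv : v ∈ Q) : δ (P ∪ Q) ≤ δ P + δ {u, v} + δ Q := by
  have hPu := hδ.triangle P Q {u} (by simp)
  have huQ := hδ.triangle {u} Q {v} (by simp)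
  rw [union_eq_left.2 (singleton_subset_iff.2 hu)] at hPu
  rw [union_eq_right.2 (singleton_subset_iff.2 hv)] at huQ
  rw [insert_eq]
  linarith

theorem le_sum_of_connects (hδ : IsSemidiversity δ) {E : Finset (X × X)} {A : Finset X}
    (hA : Connects E A) : δ A ≤ ∑ e ∈ E, δ {e.1, e.2} := by
  induction E using Finset.strongInduction generalizing A with
  | H E ih =>
  rcases E.eq_empty_or_nonempty with rfl | ⟨e, he⟩
  · simp [hδ.eq_zero_of_card_le_one A hA.card_le_one_of_empty]
  rw [← add_sum_erase E _ he]
  rcases hA.erase_or e with hA' | ⟨huv, hside⟩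
  · linarith [ih _ (erase_ssubset he) hA', hδ.nonneg {e.1, e.2}]
  set R := E.erase e
  set E₁ := R.filter fun f => Linked R f.1 e.1
  set E₂ := R.filter fun f => ¬ Linked R f.1 e.1
  set P := insert e.1 (A.filter (Linked R · e.1))
  set Q := insert e.2 (A.filter (Linked R · e.2))
  have hAPQ : A ⊆ P ∪ Q := fun a ha => by
    rcases hside a ha with h | h
    · exact mem_union_left _ (mem_insert_of_mem (mem_filter.2 ⟨ha, h⟩))
    · exact mem_union_right _ (mem_insert_of_mem (mem_filter.2 ⟨ha, h⟩))
  have hRE := erase_ssubset he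
  calc δ A ≤ δ (P ∪ Q) := hδ.mono hAPQ
    _ ≤ δ P + δ {e.1, e.2} + δ Q := hδ.le_add_pair_add (mem_insert_self _ _) (mem_insert_self _ _)
    _ ≤ ∑ f ∈ E₁, δ {f.1, f.2} + δ {e.1, e.2} + ∑ f ∈ E₂, δ {f.1, f.2} := by
      gcongr
      exacts [ih _ ((filter_subset _ _).trans_ssubset hRE) (connects_component R A e.1),
        ih _ ((filter_subset _ _).trans_ssubset hRE) (connects_component_of_not_linked huv A)]
    _ = δ {e.1, e.2} + ∑ f ∈ R, δ {f.1, f.2} := by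
      rw [← sum_filter_add_sum_filter_not R (fun f => Linked R f.1 e.1)]; ring

end IsSemidiversity

end Semidiversity

theorem steiner_maximal_general {X : Type*} [DecidableEq X] (δ : Finset X → ℝ)
    (h_zero : ∀ A : Finset X, δ A = 0 ↔ A.card ≤ 1)
    (h_tri : ∀ A B C : Finset X, C.Nonempty → δ (A ∪ B) ≤ δ (A ∪ C) + δ (C ∪ B)) :
    ∀ A : Finset X, δ A ≤ steinerDiv (fun x y => δ {x, y}) A := by
  have hδ : IsSemidiversity δ := ⟨fun A h => (h_zero A).2 h, h_tri⟩
  intro A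
  refine le_csInf ⟨_, A ×ˢ A, fun a ha b hb => .single (.inl (mem_product.2 ⟨ha, hb⟩)), rfl⟩ ?_
  rintro c ⟨E, hE, rfl⟩
  exact hδ.le_sum_of_connects hE

/-- The Steiner diversity is the maximal diversity with induced
metric d: if (X, δ) is a finite diversity with induced metric d(x,y) = δ({x,y})
and δ_S is the Steiner diversity of (X,d), then δ(A) ≤ δ_S(A) for all finite A. -/
theorem steiner_maximal {X : Type*} [Fintype X] [DecidableEq X] (δ : Finset X → ℝ)
    (h_nonneg : ∀ A : Finset X, 0 ≤ δ A)
    (h_zero : ∀ A : Finset X, δ A = 0 ↔ A.card ≤ 1)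
    (h_tri : ∀ A B C : Finset X, C.Nonempty → δ (A ∪ B) ≤ δ (A ∪ C) + δ (C ∪ B)) :
    ∀ A : Finset X, δ A ≤ steinerDiv (fun x y => δ {x, y}) A :=
  steiner_maximal_general δ h_zero h_tri
end

section
/- Let (X, δ_H) be the hypergraph Steiner diversity of a weighted hypergraph H with all hyperedge sizes at most k (k ≥ 2), and let δ_S be the Steiner diversity of the graph G obtained by replacing each hyperedge U by a spanning tree on U whose edges all have weight w(U). Then δ_H(A) ≤ δ_S(A) ≤ (k−1)·δ_H(A) for all finite A. -/
/-!
A graph connector for `A` made of tree edges projects, edge by edge, onto the hyperedges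
carrying them; these hyperedges connect `A` and cost no more, since weights are nonnegative.
Conversely, replacing each hyperedge `U` of a hypergraph connector by its tree `T U` connects
the same vertices and multiplies the cost of `U` by `#(T U) = #U - 1 ≤ k - 1`. Passing to
infima gives both inequalities.
-/

open Finset Relation

theorem Real.sInf_le_mul_sInf_of_forall_exists_le {S T : Set ℝ} {c : ℝ} (hc : 0 ≤ c)
    (hS : BddBelow S) (hT : T.Nonempty) (h : ∀ t ∈ T, ∃ s ∈ S, s ≤ c * t) :
    sInf S ≤ c * sInf T := by
  rw [← smul_eq_mul, ← Real.sInf_smul_of_nonneg hc]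
  refine le_csInf (hT.smul_set) ?_
  rintro _ ⟨t, ht, rfl⟩
  obtain ⟨s, hs, hst⟩ := h t ht
  exact (csInf_le hS hs).trans hst

namespace SteinerDiversity

variable {V : Type*}

def ConnectsAll (r : V → V → Prop) (A : Finset V) : Prop :=
  ∀ a ∈ A, ∀ b ∈ A, ReflTransGen r a b

theorem ConnectsAll.mono {r s : V → V → Prop} {A : Finset V}
    (hrs : ∀ u v, r u v → ReflTransGen s u v) (h : ConnectsAll r A) : ConnectsAll s A :=
  fun a ha b hb => reflTransGen_closed hrs a b (h a ha b hb)

def HyperAdj (F : Finset (Finset V)) (u v : V) : Prop :=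
  ∃ U ∈ F, u ∈ U ∧ v ∈ U

def EdgeAdj (F : Finset (Finset V × (V × V))) (u v : V) : Prop :=
  ∃ p ∈ F, p.2 = (u, v) ∨ p.2 = (v, u)

def hyperSteinerCosts (E : Finset (Finset V)) (w : Finset V → ℝ) (A : Finset V) : Set ℝ :=
  {c | ∃ F ⊆ E, ConnectsAll (HyperAdj F) A ∧ c = ∑ U ∈ F, w U}

variable {E : Finset (Finset V)} {w : Finset V → ℝ} {A : Finset V}

theorem hyperSteinerCosts_bddBelow (hw : ∀ U ∈ E, 0 ≤ w U) :
    BddBelow (hyperSteinerCosts E w A) := by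
  refine ⟨0, ?_⟩
  rintro _ ⟨F, hF, -, rfl⟩
  exact sum_nonneg fun U hU => hw U (hF hU)

variable [DecidableEq V]

def treeEdges (E : Finset (Finset V)) (T : Finset V → Finset (V × V)) :
    Finset (Finset V × (V × V)) :=
  E.biUnion fun U => (T U).image fun e => (U, e)

def graphSteinerCosts (E : Finset (Finset V)) (T : Finset V → Finset (V × V))
    (w : Finset V → ℝ) (A : Finset V) : Set ℝ :=
  {c | ∃ F ⊆ treeEdges E T, ConnectsAll (EdgeAdj F) A ∧ c = ∑ p ∈ F, w p.1}

variable {T : Finset V → Finset (V × V)}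

theorem mem_treeEdges {p : Finset V × (V × V)} :
    p ∈ treeEdges E T ↔ p.1 ∈ E ∧ p.2 ∈ T p.1 := by
  simp only [treeEdges, mem_biUnion, mem_image]
  constructor
  · rintro ⟨U, hU, e, he, rfl⟩
    exact ⟨hU, he⟩
  · intro h
    exact ⟨p.1, h.1, p.2, h.2, rfl⟩

theorem treeEdges_mono {F : Finset (Finset V)} (hF : F ⊆ E) : treeEdges F T ⊆ treeEdges E T :=
  biUnion_subset_biUnion_of_subset_left _ hF

theorem sum_treeEdges (F : Finset (Finset V)) :
    ∑ p ∈ treeEdges F T, w p.1 = ∑ U ∈ F, #(T U) * w U := by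
  have hdisj : (F : Set (Finset V)).PairwiseDisjoint fun U => (T U).image fun e => (U, e) := by
    intro U _ U' _ hUU'
    refine disjoint_left.mpr fun p hp hp' => hUU' ?_
    obtain ⟨e, -, rfl⟩ := mem_image.mp hp
    obtain ⟨e', -, he'⟩ := mem_image.mp hp'
    exact (congrArg Prod.fst he').symm
  rw [treeEdges, sum_biUnion hdisj]
  refine sum_congr rfl fun U _ => ?_
  rw [sum_image fun _ _ _ _ h => congrArg Prod.snd h]
  simp only [sum_const, nsmul_eq_mul]

theorem graphSteinerCosts_bddBelow (hw : ∀ U ∈ E, 0 ≤ w U) :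
    BddBelow (graphSteinerCosts E T w A) := by
  refine ⟨0, ?_⟩
  rintro _ ⟨F, hF, -, rfl⟩
  exact sum_nonneg fun p hp => hw p.1 (mem_treeEdges.mp (hF hp)).1

theorem exists_hyperSteinerCost_le (hw : ∀ U ∈ E, 0 ≤ w U)
    (hTsub : ∀ U ∈ E, ∀ e ∈ T U, e.1 ∈ U ∧ e.2 ∈ U) {c : ℝ}
    (hc : c ∈ graphSteinerCosts E T w A) : ∃ c' ∈ hyperSteinerCosts E w A, c' ≤ c := by
  obtain ⟨F, hFE, hconn, rfl⟩ := hc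
  have hfst : ∀ p ∈ F, p.1 ∈ E ∧ p.2 ∈ T p.1 := fun p hp => mem_treeEdges.mp (hFE hp)
  have himage : F.image Prod.fst ⊆ E := by
    intro U hU
    obtain ⟨p, hp, rfl⟩ := mem_image.mp hU
    exact (hfst p hp).1
  refine ⟨_, ⟨F.image Prod.fst, himage, ?_, rfl⟩, ?_⟩
  · refine hconn.mono fun u v ⟨p, hp, huv⟩ =>
      ReflTransGen.single ⟨p.1, mem_image_of_mem _ hp, ?_⟩
    have hends := hTsub p.1 (hfst p hp).1 p.2 (hfst p hp).2
    rcases huv with huv | huv <;> simp only [huv] at hends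
    · exact hends
    · exact hends.symm
  · exact sum_image_le_of_nonneg fun U hU => hw U (himage hU)

theorem exists_graphSteinerCost_le (hw : ∀ U ∈ E, 0 ≤ w U)
    (hTconn : ∀ U ∈ E, ∀ u ∈ U, ∀ v ∈ U,
      ReflTransGen (fun x y => (x, y) ∈ T U ∨ (y, x) ∈ T U) u v)
    {m : ℝ} (hTcard : ∀ U ∈ E, (#(T U) : ℝ) ≤ m) {c : ℝ}
    (hc : c ∈ hyperSteinerCosts E w A) : ∃ c' ∈ graphSteinerCosts E T w A, c' ≤ m * c := by
  obtain ⟨F, hFE, hconn, rfl⟩ := hc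
  refine ⟨_, ⟨treeEdges F T, treeEdges_mono hFE, ?_, rfl⟩, ?_⟩
  · have htree : ∀ U ∈ F, ∀ x y,
        (x, y) ∈ T U ∨ (y, x) ∈ T U → EdgeAdj (treeEdges F T) x y := by
      rintro U hU x y (h | h)
      · exact ⟨(U, (x, y)), mem_treeEdges.mpr ⟨hU, h⟩, Or.inl rfl⟩
      · exact ⟨(U, (y, x)), mem_treeEdges.mpr ⟨hU, h⟩, Or.inr rfl⟩
    exact hconn.mono fun u v ⟨U, hU, hu, hv⟩ =>
      ReflTransGen.mono (htree U hU) u v (hTconn U (hFE hU) u hu v hv)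
  · rw [sum_treeEdges, mul_sum]
    exact sum_le_sum fun U hU =>
      mul_le_mul_of_nonneg_right (hTcard U (hFE hU)) (hw U (hFE hU))

end SteinerDiversity

open SteinerDiversity

theorem hypergraph_steiner_vs_graph_steiner_general {V : Type*} [DecidableEq V]
    (E : Finset (Finset V)) (w : Finset V → ℝ)
    (hw : ∀ U ∈ E, 0 ≤ w U)
    (k : ℕ) (hk : 2 ≤ k) (hsize : ∀ U ∈ E, U.card ≤ k)
    -- T U is a spanning tree of the complete graph on U:
    (T : Finset V → Finset (V × V))
    (hTsub : ∀ U ∈ E, ∀ e ∈ T U, e.1 ∈ U ∧ e.2 ∈ U)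
    (hTconn : ∀ U ∈ E, ∀ u ∈ U, ∀ v ∈ U,
      Relation.ReflTransGen (fun x y => (x, y) ∈ T U ∨ (y, x) ∈ T U) u v)
    (hTcard : ∀ U ∈ E, (T U).card + 1 = U.card)
    -- the hypergraph Steiner diversity δ_H:
    (δH : Finset V → ℝ)
    (hδH : ∀ A : Finset V, δH A = sInf { c : ℝ | ∃ F : Finset (Finset V), F ⊆ E ∧
      (∀ a ∈ A, ∀ b ∈ A,
        Relation.ReflTransGen (fun u v => ∃ U ∈ F, u ∈ U ∧ v ∈ U) a b) ∧
      c = ∑ U ∈ F, w U })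
    -- the Steiner diversity δ_S of the graph G whose edge set is the disjoint
    -- union of the trees T U (an edge of G is a pair (U, e) with e ∈ T U, of
    -- weight w U):
    (δS : Finset V → ℝ)
    (hδS : ∀ A : Finset V, δS A = sInf { c : ℝ |
      ∃ F : Finset (Finset V × (V × V)),
      F ⊆ E.biUnion (fun U => (T U).image (fun e => (U, e))) ∧
      (∀ a ∈ A, ∀ b ∈ A,
        Relation.ReflTransGen (fun u v => ∃ p ∈ F, p.2 = (u, v) ∨ p.2 = (v, u)) a b) ∧
      c = ∑ p ∈ F, w p.1 }) :
    ∀ A : Finset V, δH A ≤ δS A ∧ δS A ≤ ((k : ℝ) - 1) * δH A := by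
  intro A
  have hH : δH A = sInf (hyperSteinerCosts E w A) := hδH A
  have hS : δS A = sInf (graphSteinerCosts E T w A) := hδS A
  have hk1 : (0 : ℝ) ≤ k - 1 := sub_nonneg.mpr (by exact_mod_cast (by omega : 1 ≤ k))
  have htree : ∀ U ∈ E, ((T U).card : ℝ) ≤ k - 1 := fun U hU => by
    rw [le_sub_iff_add_le]
    exact_mod_cast hTcard U hU ▸ hsize U hU
  have graph_to_hyper : ∀ c ∈ graphSteinerCosts E T w A, ∃ c' ∈ hyperSteinerCosts E w A,
      c' ≤ 1 * c :=
    fun c hc => by simpa using exists_hyperSteinerCost_le hw hTsub hc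
  have hyper_to_graph : ∀ c ∈ hyperSteinerCosts E w A, ∃ c' ∈ graphSteinerCosts E T w A,
      c' ≤ (k - 1) * c :=
    fun c hc => exists_graphSteinerCost_le hw hTconn htree hc
  rw [hH, hS]
  rcases (hyperSteinerCosts E w A).eq_empty_or_nonempty with hHe | ⟨c, hc⟩
  · have hSe : graphSteinerCosts E T w A = ∅ :=
      Set.eq_empty_of_forall_notMem fun c hc => by
        obtain ⟨c', hc', -⟩ := graph_to_hyper c hc
        simp [hHe] at hc'
    simp [hHe, hSe]
  · obtain ⟨c', hc', -⟩ := hyper_to_graph c hc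
    refine ⟨?_, Real.sInf_le_mul_sInf_of_forall_exists_le hk1 (graphSteinerCosts_bddBelow hw)
      ⟨c, hc⟩ hyper_to_graph⟩
    simpa using Real.sInf_le_mul_sInf_of_forall_exists_le zero_le_one
      (hyperSteinerCosts_bddBelow hw) ⟨c', hc'⟩ graph_to_hyper

/-- Let δ_H be the hypergraph Steiner diversity of a weighted
hypergraph H = (V, E, w) with nonnegative weights and all hyperedge sizes at
most k (k ≥ 2), and let δ_S be the Steiner diversity of the weighted graph G
obtained by replacing each hyperedge U by a (chosen) spanning tree T(U) on U
whose edges all carry weight w(U), the edge sets taken disjointly.  Then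
δ_H(A) ≤ δ_S(A) ≤ (k−1)·δ_H(A) for all finite A. -/
theorem hypergraph_steiner_vs_graph_steiner {V : Type*} [DecidableEq V]
    (E : Finset (Finset V)) (w : Finset V → ℝ)
    (hw : ∀ U ∈ E, 0 ≤ w U)
    (hne : ∀ U ∈ E, U.Nonempty)
    (k : ℕ) (hk : 2 ≤ k) (hsize : ∀ U ∈ E, U.card ≤ k)
    -- T U is a spanning tree of the complete graph on U:
    (T : Finset V → Finset (V × V))
    (hTsub : ∀ U ∈ E, ∀ e ∈ T U, e.1 ∈ U ∧ e.2 ∈ U)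
    (hTconn : ∀ U ∈ E, ∀ u ∈ U, ∀ v ∈ U,
      Relation.ReflTransGen (fun x y => (x, y) ∈ T U ∨ (y, x) ∈ T U) u v)
    (hTcard : ∀ U ∈ E, (T U).card + 1 = U.card)
    -- the hypergraph Steiner diversity δ_H:
    (δH : Finset V → ℝ)
    (hδH : ∀ A : Finset V, δH A = sInf { c : ℝ | ∃ F : Finset (Finset V), F ⊆ E ∧
      (∀ a ∈ A, ∀ b ∈ A,
        Relation.ReflTransGen (fun u v => ∃ U ∈ F, u ∈ U ∧ v ∈ U) a b) ∧
      c = ∑ U ∈ F, w U })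
    -- the Steiner diversity δ_S of the graph G whose edge set is the disjoint
    -- union of the trees T U (an edge of G is a pair (U, e) with e ∈ T U, of
    -- weight w U):
    (δS : Finset V → ℝ)
    (hδS : ∀ A : Finset V, δS A = sInf { c : ℝ |
      ∃ F : Finset (Finset V × (V × V)),
      F ⊆ E.biUnion (fun U => (T U).image (fun e => (U, e))) ∧
      (∀ a ∈ A, ∀ b ∈ A,
        Relation.ReflTransGen (fun u v => ∃ p ∈ F, p.2 = (u, v) ∨ p.2 = (v, u)) a b) ∧
      c = ∑ p ∈ F, w p.1 }) :
    ∀ A : Finset V, δH A ≤ δS A ∧ δS A ≤ ((k : ℝ) - 1) * δH A :=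
  hypergraph_steiner_vs_graph_steiner_general E w hw k hk hsize T hTsub hTconn hTcard δH hδH δS hδS
end

section
/- Suppose nonnegative constants c_a, a ∈ X, with |X| = n ≥ 2, satisfy Σ_{a∈X} c_a ≤ 1 and, for some g ≥ 0 and every pair of distinct a₁, a₂ ∈ X, 1 ≤ g·(c_{a₁} + c_{a₂}). Then g ≥ ⌊n/2⌋. -/
lemma sum_pairs (d : ℕ → ℝ) (m : ℕ) :
    ∑ i ∈ Finset.range m, (d (2*i) + d (2*i+1)) = ∑ j ∈ Finset.range (2*m), d j := by
  induction m with
  | zero => simp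
  | succ k ih =>
      rw [Finset.sum_range_succ, ih, Nat.mul_succ, Finset.sum_range_succ,
        Finset.sum_range_succ]
      ring

/-- Suppose nonnegative constants c_a, a ∈ X, with |X| = n ≥ 2,
satisfy Σ_{a∈X} c_a ≤ 1 and, for some g ≥ 0 and every pair of distinct
a₁, a₂ ∈ X, 1 ≤ g·(c_{a₁} + c_{a₂}).  Then g ≥ ⌊n/2⌋. -/
theorem bourgain_counting {X : Type*} [Fintype X]
    (n : ℕ) (hn : n = Fintype.card X) (hn2 : 2 ≤ n)
    (c : X → ℝ) (hc : ∀ a : X, 0 ≤ c a)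
    (hsum : ∑ a : X, c a ≤ 1)
    (g : ℝ) (hg : 0 ≤ g)
    (hpair : ∀ a₁ a₂ : X, a₁ ≠ a₂ → 1 ≤ g * (c a₁ + c a₂)) :
    ((n / 2 : ℕ) : ℝ) ≤ g := by
  set N := Fintype.card X with hN
  let e : Fin N ≃ X := (Fintype.equivFin X).symm
  set d : ℕ → ℝ := fun i => if h : i < N then c (e ⟨i, h⟩) else 0 with hd
  have hd0 : ∀ i, 0 ≤ d i := by
    intro i; simp only [hd]; split <;> first | exact hc _ | exact le_rfl
  have hdsum : ∑ j ∈ Finset.range N, d j = ∑ a : X, c a := by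
    rw [← e.sum_comp, ← Fin.sum_univ_eq_sum_range]
    apply Finset.sum_congr rfl
    intro i _
    simp [hd, i.isLt]
  set m := n / 2 with hm
  have h2m : 2 * m ≤ N := by
    rw [← hn]; omega
  have hkey : ∀ i ∈ Finset.range m, 1 ≤ g * (d (2*i) + d (2*i+1)) := by
    intro i hi
    have hi' : i < m := Finset.mem_range.mp hi
    have h1 : 2*i < N := by omega
    have h2 : 2*i+1 < N := by omega
    have : d (2*i) = c (e ⟨2*i, h1⟩) := by simp [hd, h1]
    rw [this]
    have : d (2*i+1) = c (e ⟨2*i+1, h2⟩) := by simp [hd, h2]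
    rw [this]
    apply hpair
    intro h
    have := e.injective h
    simp [Fin.ext_iff] at this
  have hsum2 : (m : ℝ) ≤ ∑ i ∈ Finset.range m, g * (d (2*i) + d (2*i+1)) := by
    calc (m : ℝ) = ∑ i ∈ Finset.range m, (1:ℝ) := by simp
    _ ≤ _ := Finset.sum_le_sum hkey
  rw [← Finset.mul_sum, sum_pairs] at hsum2
  have hle1 : ∑ j ∈ Finset.range (2*m), d j ≤ 1 := by
    calc ∑ j ∈ Finset.range (2*m), d j
        ≤ ∑ j ∈ Finset.range N, d j :=
          Finset.sum_le_sum_of_subset_of_nonneg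
            (Finset.range_subset_range.mpr h2m) (fun i _ _ => hd0 i)
    _ = ∑ a : X, c a := hdsum
    _ ≤ 1 := hsum
  calc (m : ℝ) ≤ g * ∑ j ∈ Finset.range (2*m), d j := hsum2
  _ ≤ g * 1 := by exact mul_le_mul_of_nonneg_left hle1 hg
  _ = g := mul_one g
end
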